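/- arXiv:2209.05137 — 5 statements merged into one kernel-verified Lean document; each statement's English description precedes it below -/
import Mathlib

section
/- Let λ1, λ2 > 0 and let (u0m, v0m), (u0p, v0p) ∈ ℝ² be given trace data. Then the 4×4 linear system consisting of the backward Lax-curve condition v_R − v0m = −λ1·(u_R − u0m), the forward Lax-curve condition v_L − v0p = λ2·(u_L − u0p), and the two coupling conditions v_R = v_L and λ1²·u_R = λ2²·u_L has a unique solution (u_R, v_R, u_L, v_L), given explicitly by u_R = (λ2/λ1)·(λ1·u0m + λ2·u0p + v0m − v0p)/(λ1 + λ2), u_L = (λ1/λ2)·(λ1·u0m + λ2·u0p + v0m − v0p)/(λ1 + λ2), and v_R = v_L = (λ1·v0m + λ2·v0p + λ1²·u0m − λ2²·u0p)/(λ1 + λ2). -/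
/-- For λ1, λ2 > 0 and trace data (u0m, v0m), (u0p, v0p), the 4×4 linear
system consisting of the backward Lax-curve condition, the forward Lax-curve condition
and the two coupling conditions has a unique solution, given explicitly. -/
theorem coupling_data_one_to_one_unique
    (l1 l2 : ℝ) (hl1 : 0 < l1) (hl2 : 0 < l2)
    (u0m v0m u0p v0p : ℝ) :
    ∀ uR vR uL vL : ℝ,
      (vR - v0m = -l1 * (uR - u0m) ∧
       vL - v0p = l2 * (uL - u0p) ∧
       vR = vL ∧
       l1 ^ 2 * uR = l2 ^ 2 * uL) ↔
      (uR = (l2 / l1) * ((l1 * u0m + l2 * u0p + v0m - v0p) / (l1 + l2)) ∧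
       uL = (l1 / l2) * ((l1 * u0m + l2 * u0p + v0m - v0p) / (l1 + l2)) ∧
       vR = (l1 * v0m + l2 * v0p + l1 ^ 2 * u0m - l2 ^ 2 * u0p) / (l1 + l2) ∧
       vL = (l1 * v0m + l2 * v0p + l1 ^ 2 * u0m - l2 ^ 2 * u0p) / (l1 + l2)) := by
  intro uR vR uL vL
  have h1 : l1 ≠ 0 := ne_of_gt hl1
  have h2 : l2 ≠ 0 := ne_of_gt hl2
  have h12 : l1 + l2 ≠ 0 := ne_of_gt (by linarith)
  constructor
  · rintro ⟨e1, e2, e3, e4⟩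
    have huR : uR = (l2 / l1) * ((l1 * u0m + l2 * u0p + v0m - v0p) / (l1 + l2)) := by
      field_simp
      nlinarith [e1, e2, e3, e4, sq_nonneg l1, sq_nonneg l2]
    have huL : uL = (l1 / l2) * ((l1 * u0m + l2 * u0p + v0m - v0p) / (l1 + l2)) := by
      field_simp
      nlinarith [e1, e2, e3, e4]
    have hvR : vR = (l1 * v0m + l2 * v0p + l1 ^ 2 * u0m - l2 ^ 2 * u0p) / (l1 + l2) := by
      have : vR * (l1 + l2) = l1 * v0m + l2 * v0p + l1 ^ 2 * u0m - l2 ^ 2 * u0p := by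
        rw [huR] at e1
        field_simp at e1
        nlinarith [e1, hl1, hl2]
      field_simp
      linarith
    exact ⟨huR, huL, hvR, e3 ▸ hvR⟩
  · rintro ⟨huR, huL, hvR, hvL⟩
    subst huR huL hvR hvL
    refine ⟨by field_simp; ring, by field_simp; ring, rfl, by field_simp⟩
end

section
/- Assume f1 = f2 = f : ℝ → ℝ and λ1 = λ2 = λ > 0, and let Δx > 0, ε > 0. Let (u_j, v_j)_{j∈ℤ} be cell averages, and define the coupling data (u_R, v_R, u_L, v_L) from the traces (u_{−1}, v_{−1}, u_0, v_0) by the explicit formulas u_R = u_L = (u_{−1} + u_0)/2 + (v_{−1} − v_0)/(2λ) and v_R = v_L = (v_{−1} + v_0)/2 + (λ/2)(u_{−1} − u_0). Then the semi-discrete coupled update expressions ∂_t u_{−1} = −(v_R − v_{−2})/(2Δx) + (λ/(2Δx))(u_R − 2u_{−1} + u_{−2}), ∂_t v_{−1} = −(λ²/(2Δx))(u_R − u_{−2}) + (λ/(2Δx))(v_R − 2v_{−1} + v_{−2}) + (1/ε)(f(u_{−1}) − v_{−1}), and the analogous expressions at cell 0 using (u_L, v_L) as left ghost data, coincide with the uncoupled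 semi-discrete upwind scheme ∂_t u_j = −(v_{j+1} − v_{j−1})/(2Δx) + (λ/(2Δx))(u_{j+1} − 2u_j + u_{j−1}), ∂_t v_j = −(λ²/(2Δx))(u_{j+1} − u_{j−1}) + (λ/(2Δx))(v_{j+1} − 2v_j + v_{j−1}) + (1/ε)(f(u_j) − v_j) evaluated at j = −1 and j = 0. -/
/-- with f1 = f2 = f and λ1 = λ2 = λ, the coupled semi-discrete update
expressions at the node-adjacent cells −1 and 0 (using the simplified coupling data as
ghost values) coincide with the uncoupled semi-discrete upwind scheme evaluated at
j = −1 and j = 0. -/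
theorem semidiscrete_coupled_scheme_consistency
    (f : ℝ → ℝ) (lam dx eps : ℝ) (hlam : 0 < lam) (hdx : 0 < dx) (heps : 0 < eps)
    (u v : ℤ → ℝ) (uR vR uL vL : ℝ)
    (huR : uR = (u (-1) + u 0) / 2 + (v (-1) - v 0) / (2 * lam))
    (huL : uL = (u (-1) + u 0) / 2 + (v (-1) - v 0) / (2 * lam))
    (hvR : vR = (v (-1) + v 0) / 2 + (lam / 2) * (u (-1) - u 0))
    (hvL : vL = (v (-1) + v 0) / 2 + (lam / 2) * (u (-1) - u 0)) :
    -- u-update at cell −1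
    (-(vR - v (-2)) / (2 * dx) + (lam / (2 * dx)) * (uR - 2 * u (-1) + u (-2)) =
      -(v 0 - v (-2)) / (2 * dx) + (lam / (2 * dx)) * (u 0 - 2 * u (-1) + u (-2))) ∧
    -- v-update at cell −1
    (-(lam ^ 2 / (2 * dx)) * (uR - u (-2)) + (lam / (2 * dx)) * (vR - 2 * v (-1) + v (-2))
        + (1 / eps) * (f (u (-1)) - v (-1)) =
      -(lam ^ 2 / (2 * dx)) * (u 0 - u (-2)) + (lam / (2 * dx)) * (v 0 - 2 * v (-1) + v (-2))
        + (1 / eps) * (f (u (-1)) - v (-1))) ∧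
    -- u-update at cell 0
    (-(v 1 - vL) / (2 * dx) + (lam / (2 * dx)) * (u 1 - 2 * u 0 + uL) =
      -(v 1 - v (-1)) / (2 * dx) + (lam / (2 * dx)) * (u 1 - 2 * u 0 + u (-1))) ∧
    -- v-update at cell 0
    (-(lam ^ 2 / (2 * dx)) * (u 1 - uL) + (lam / (2 * dx)) * (v 1 - 2 * v 0 + vL)
        + (1 / eps) * (f (u 0) - v 0) =
      -(lam ^ 2 / (2 * dx)) * (u 1 - u (-1)) + (lam / (2 * dx)) * (v 1 - 2 * v 0 + v (-1))
        + (1 / eps) * (f (u 0) - v 0)) := by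
  subst huR huL hvR hvL
  refine ⟨?_, ?_, ?_, ?_⟩ <;> field_simp <;> ring
end

section
/- Let f : ℝ → ℝ be differentiable with −λ ≤ f′(s) ≤ λ for all s ∈ ℝ (subcharacteristic condition), and let Δx, Δt > 0 satisfy λ·Δt ≤ Δx. Then the update map H(a, b, c) = b − (Δt/(2Δx))·(f(c) − f(a)) + (λΔt/(2Δx))·(c − 2b + a) is monotone: H is nondecreasing in each of its three arguments a, b, c. -/
/-! Regrouping the update map by its arguments: in `a` it is a constant plus
`Δt/(2Δx) · (f a + λ a)`, in `c` a constant plus `Δt/(2Δx) · (λ c − f c)`, and in `b` a constant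
plus `(1 − λΔt/Δx) · b`. The subcharacteristic condition makes `f + λ id` and `λ id − f`
nondecreasing, and the CFL condition makes `1 − λΔt/Δx` nonnegative. -/

theorem monotone_add_const_mul_of_neg_le_deriv {f : ℝ → ℝ} (hf : Differentiable ℝ f) {lam : ℝ}
    (h : ∀ x, -lam ≤ deriv f x) : Monotone fun x => f x + lam * x := by
  have hderiv : ∀ x, HasDerivAt (fun x => f x + lam * x) (deriv f x + lam * 1) x :=
    fun x => (hf x).hasDerivAt.add ((hasDerivAt_id x).const_mul lam)
  refine monotone_of_deriv_nonneg (fun x => (hderiv x).differentiableAt) fun x => ?_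
  rw [(hderiv x).deriv]
  linarith [h x]

theorem monotone_const_mul_sub_of_deriv_le {f : ℝ → ℝ} (hf : Differentiable ℝ f) {lam : ℝ}
    (h : ∀ x, deriv f x ≤ lam) : Monotone fun x => lam * x - f x := by
  have hderiv : ∀ x, HasDerivAt (fun x => lam * x - f x) (lam * 1 - deriv f x) x :=
    fun x => ((hasDerivAt_id x).const_mul lam).sub (hf x).hasDerivAt
  refine monotone_of_deriv_nonneg (fun x => (hderiv x).differentiableAt) fun x => ?_
  rw [(hderiv x).deriv]
  linarith [h x]

theorem relaxed_scheme_monotone_general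
    (f : ℝ → ℝ) (hf : Differentiable ℝ f)
    (lam dx dt : ℝ) (hdx : 0 < dx) (hdt : 0 < dt)
    (hsub : ∀ s : ℝ, -lam ≤ deriv f s ∧ deriv f s ≤ lam)
    (hcfl : lam * dt ≤ dx) :
    (∀ b c : ℝ, Monotone (fun a : ℝ =>
      b - (dt / (2 * dx)) * (f c - f a) + (lam * dt / (2 * dx)) * (c - 2 * b + a))) ∧
    (∀ a c : ℝ, Monotone (fun b : ℝ =>
      b - (dt / (2 * dx)) * (f c - f a) + (lam * dt / (2 * dx)) * (c - 2 * b + a))) ∧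
    (∀ a b : ℝ, Monotone (fun c : ℝ =>
      b - (dt / (2 * dx)) * (f c - f a) + (lam * dt / (2 * dx)) * (c - 2 * b + a))) := by
  have hk : 0 ≤ dt / (2 * dx) := by positivity
  have hcfl' : 0 ≤ 1 - lam * dt / dx := sub_nonneg.2 ((div_le_one hdx).2 hcfl)
  have hleft := monotone_add_const_mul_of_neg_le_deriv hf fun s => (hsub s).1
  have hright := monotone_const_mul_sub_of_deriv_le hf fun s => (hsub s).2
  refine ⟨fun b c x y hxy => ?_, fun a c x y hxy => ?_, fun a b x y hxy => ?_⟩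
  · linear_combination mul_le_mul_of_nonneg_left (hleft hxy) hk
  · linear_combination mul_le_mul_of_nonneg_left hxy hcfl'
  · linear_combination mul_le_mul_of_nonneg_left (hright hxy) hk

/-- under the subcharacteristic condition −λ ≤ f′ ≤ λ and the CFL
condition λΔt ≤ Δx, the update map of the first-order relaxed scheme is monotone
(nondecreasing) in each of its three arguments. -/
theorem relaxed_scheme_monotone
    (f : ℝ → ℝ) (hf : Differentiable ℝ f)
    (lam dx dt : ℝ) (hlam : 0 < lam) (hdx : 0 < dx) (hdt : 0 < dt)
    (hsub : ∀ s : ℝ, -lam ≤ deriv f s ∧ deriv f s ≤ lam)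
    (hcfl : lam * dt ≤ dx) :
    (∀ b c : ℝ, Monotone (fun a : ℝ =>
      b - (dt / (2 * dx)) * (f c - f a) + (lam * dt / (2 * dx)) * (c - 2 * b + a))) ∧
    (∀ a c : ℝ, Monotone (fun b : ℝ =>
      b - (dt / (2 * dx)) * (f c - f a) + (lam * dt / (2 * dx)) * (c - 2 * b + a))) ∧
    (∀ a b : ℝ, Monotone (fun c : ℝ =>
      b - (dt / (2 * dx)) * (f c - f a) + (lam * dt / (2 * dx)) * (c - 2 * b + a))) :=
  relaxed_scheme_monotone_general f hf lam dx dt hdx hdt hsub hcfl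
end

section
/- Let f = f1 = f2 : ℝ → ℝ be differentiable with −λ ≤ f′(s) ≤ λ for all s (subcharacteristic condition), λ > 0 = λ1 = λ2, and let Δx, Δt > 0 satisfy λ·Δt ≤ Δx/2. Let (u_j^n)_{j∈ℤ} be a sequence of finite total variation that is constant outside a finite set of indices, define the characteristic variables w_j^{n∓} = ½f(u_j^n) ∓ (λ/2)u_j^n and the MC-limited slopes s_j^{n∓} = minmod( 2(w_j^{n∓} − w_{j−1}^{n∓})/Δx, (w_{j+1}^{n∓} − w_{j−1}^{n∓})/(2Δx), 2(w_{j+1}^{n∓} − w_j^{n∓})/Δx ), with the node-adjacent slopes s_{−1}^{n−} and s_0^{n+} set to 0. Define u_j^{n+1} = u_j^n − (Δt/Δx)(F_{j+1/2}^n − F_{j−1/2}^n) with F_{j−1/2}^n = ½(f(u_{j−1}^n) + f(u_j^n)) − (λ/2)(u_j^n − u_{j−1}^n) − (Δx/2)(s_j^{n−} − s_{j−1}^{n+}). Then the scheme is total variation diminishing: Σ_{j∈ℤ} |u_{j+1}^{n+1} − u_j^{n+1}| ≤ Σ_{j∈ℤ} |u_{j+1}^n − u_j^n|. -/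
/-!
The numerical flux splits into the upwind fluxes of the characteristic variables
`w⁺ = f(u)/2 + λu/2` (transported to the right) and `w⁻ = f(u)/2 - λu/2` (to the left), and
`λ u = w⁺ - w⁻`. The flux correction `(Δx/2) s` of an MC-limited slope lies between `0` and each
of the two adjacent differences of `w`, i.e. it equals `θ Δw_{j-1/2} = η Δw_{j+1/2}` with
`θ, η ∈ [0, 1]`. Hence each half of the scheme is in Harten's incremental form: with
`ν = λΔt/Δx ≤ 1/2`, the increment of `w⁺` at `j` keeps the fraction `1 - C_j` of `Δw⁺_j` and
receives the fraction `C_{j-1}` of `Δw⁺_{j-1}`, where `C_j = ν (1 + θ_{j+1} - η_j) ∈ [0, 1]`;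
symmetrically for `w⁻`. Such a redistribution does not increase `∑ |Δw|`, so
`λ TV(u^{n+1}) ≤ TV(w⁺) + TV(w⁻)`. Finally, `|f'| ≤ λ` gives `|Δw⁺| + |Δw⁻| = λ |Δu|`
pointwise, so the right-hand side is `λ TV(u^n)`.
-/

noncomputable def minmod (q1 q2 q3 : ℝ) : ℝ :=
  if q1 < 0 ∧ q2 < 0 ∧ q3 < 0 then max q1 (max q2 q3)
  else if 0 < q1 ∧ 0 < q2 ∧ 0 < q3 then min q1 (min q2 q3)
  else 0

open Set Function
open scoped fwdDiff

lemma minmod_mem_uIcc_left (q₁ q₂ q₃ : ℝ) : minmod q₁ q₂ q₃ ∈ uIcc 0 q₁ := by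
  unfold minmod
  split_ifs with hneg hpos
  · exact mem_uIcc.2 <| .inr ⟨le_max_left _ _, (max_lt hneg.1 (max_lt hneg.2.1 hneg.2.2)).le⟩
  · exact mem_uIcc.2 <| .inl ⟨(lt_min hpos.1 (lt_min hpos.2.1 hpos.2.2)).le, min_le_left _ _⟩
  · exact left_mem_uIcc

lemma minmod_mem_uIcc_right (q₁ q₂ q₃ : ℝ) : minmod q₁ q₂ q₃ ∈ uIcc 0 q₃ := by
  unfold minmod
  split_ifs with hneg hpos
  · exact mem_uIcc.2 <| .inr ⟨le_max_of_le_right (le_max_right _ _),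
      (max_lt hneg.1 (max_lt hneg.2.1 hneg.2.2)).le⟩
  · exact mem_uIcc.2 <| .inl ⟨(lt_min hpos.1 (lt_min hpos.2.1 hpos.2.2)).le,
      min_le_of_right_le (min_le_right _ _)⟩
  · exact left_mem_uIcc

lemma exists_mem_Icc_mul_eq_of_mem_uIcc {x a : ℝ} (h : x ∈ uIcc 0 a) :
    ∃ θ ∈ Icc (0 : ℝ) 1, x = θ * a := by
  rw [← segment_eq_uIcc, segment_eq_image] at h
  obtain ⟨θ, hθ, rfl⟩ := h
  exact ⟨θ, hθ, by simp⟩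

lemma exists_half_mul_mc_slope_eq {dx : ℝ} (hdx : 0 < dx) (w : ℤ → ℝ) (j : ℤ) {s : ℝ}
    (hs : s = 0 ∨ s = minmod (2 * (w j - w (j - 1)) / dx) ((w (j + 1) - w (j - 1)) / (2 * dx))
      (2 * (w (j + 1) - w j) / dx)) :
    ∃ θ η : ℝ, θ ∈ Icc (0 : ℝ) 1 ∧ η ∈ Icc (0 : ℝ) 1 ∧
      dx / 2 * s = θ * (w j - w (j - 1)) ∧ dx / 2 * s = η * (w (j + 1) - w j) := by
  rcases hs with rfl | rfl
  · exact ⟨0, 0, left_mem_Icc.2 zero_le_one, left_mem_Icc.2 zero_le_one, by simp, by simp⟩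
  obtain ⟨θ, hθ, hθs⟩ := exists_mem_Icc_mul_eq_of_mem_uIcc (minmod_mem_uIcc_left _ _ _)
  obtain ⟨η, hη, hηs⟩ := exists_mem_Icc_mul_eq_of_mem_uIcc (minmod_mem_uIcc_right _ _ _)
  refine ⟨θ, η, hθ, hη, ?_, ?_⟩
  · rw [hθs]; field_simp
  · rw [hηs]; field_simp

lemma mul_one_add_sub_mem_Icc {ν θ η : ℝ} (hν₀ : 0 ≤ ν) (hν : ν ≤ 1 / 2)
    (hθ : θ ∈ Icc (0 : ℝ) 1) (hη : η ∈ Icc (0 : ℝ) 1) : ν * (1 + θ - η) ∈ Icc (0 : ℝ) 1 :=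
  ⟨mul_nonneg hν₀ (by linarith [hθ.1, hη.2]), by nlinarith [hθ.2, hη.1]⟩

def redistribute (C x : ℤ → ℝ) (k j : ℤ) : ℝ := (1 - C j) * x j + C (j + k) * x (j + k)

lemma finsum_comp_add_sub_eq_zero {y : ℤ → ℝ} (hy : HasFiniteSupport y) (k : ℤ) :
    ∑ᶠ j, (y (j + k) - y j) = 0 := by
  rw [finsum_sub_distrib (hy.fun_comp_of_injective (add_left_injective k)) hy, sub_eq_zero]
  exact finsum_comp_equiv (Equiv.addRight k)

lemma abs_redistribute_le {C x : ℤ → ℝ} (hC : ∀ j, C j ∈ Icc (0 : ℝ) 1) (k j : ℤ) :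
    |redistribute C x k j| ≤ |x j| + (C (j + k) * |x (j + k)| - C j * |x j|) := by
  have h₁ : |(1 - C j) * x j| = (1 - C j) * |x j| := by
    rw [abs_mul, abs_of_nonneg (sub_nonneg.2 (hC j).2)]
  have h₂ : |C (j + k) * x (j + k)| = C (j + k) * |x (j + k)| := by
    rw [abs_mul, abs_of_nonneg (hC _).1]
  unfold redistribute
  linarith [abs_add_le ((1 - C j) * x j) (C (j + k) * x (j + k))]

lemma hasFiniteSupport_redistribute (C : ℤ → ℝ) {x : ℤ → ℝ} (hx : HasFiniteSupport x) (k : ℤ) :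
    HasFiniteSupport (redistribute C x k) := by
  unfold redistribute
  fun_prop (disch := exact add_left_injective k)

lemma finsum_abs_redistribute_le {C x : ℤ → ℝ} (hC : ∀ j, C j ∈ Icc (0 : ℝ) 1)
    (hx : HasFiniteSupport x) (k : ℤ) : ∑ᶠ j, |redistribute C x k j| ≤ ∑ᶠ j, |x j| := by
  have hy : HasFiniteSupport fun j ↦ C j * |x j| := by fun_prop (disch := simp)
  have hA := hasFiniteSupport_redistribute C hx k
  calc ∑ᶠ j, |redistribute C x k j|
      ≤ ∑ᶠ j, (|x j| + (C (j + k) * |x (j + k)| - C j * |x j|)) := by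
        refine finsum_le_finsum' (by fun_prop (disch := simp)) ?_ (abs_redistribute_le hC k)
        fun_prop (disch := first | exact add_left_injective k | simp)
    _ = ∑ᶠ j, |x j| := by
      rw [finsum_add_distrib (by fun_prop (disch := simp))
        ((hy.fun_comp_of_injective (add_left_injective k)).fun_sub hy),
        finsum_comp_add_sub_eq_zero hy, add_zero]

lemma finsum_abs_redistribute_sub_le {C D x y : ℤ → ℝ} (hC : ∀ j, C j ∈ Icc (0 : ℝ) 1)
    (hD : ∀ j, D j ∈ Icc (0 : ℝ) 1) (hx : HasFiniteSupport x) (hy : HasFiniteSupport y)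
    (k l : ℤ) :
    ∑ᶠ j, |redistribute C x k j - redistribute D y l j| ≤ ∑ᶠ j, |x j| + ∑ᶠ j, |y j| := by
  have hA := hasFiniteSupport_redistribute C hx k
  have hB := hasFiniteSupport_redistribute D hy l
  calc ∑ᶠ j, |redistribute C x k j - redistribute D y l j|
      ≤ ∑ᶠ j, (|redistribute C x k j| + |redistribute D y l j|) :=
        finsum_le_finsum' (by fun_prop (disch := simp)) (by fun_prop (disch := simp))
          fun j ↦ abs_sub _ _
    _ ≤ ∑ᶠ j, |x j| + ∑ᶠ j, |y j| := by
      rw [finsum_add_distrib (by fun_prop (disch := simp)) (by fun_prop (disch := simp))]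
      exact add_le_add (finsum_abs_redistribute_le hC hx k) (finsum_abs_redistribute_le hD hy l)

lemma fwdDiff_add_eq_mul {w σ θ η : ℤ → ℝ} (hθ : ∀ j, σ j = θ j * (w j - w (j - 1)))
    (hη : ∀ j, σ j = η j * (w (j + 1) - w j)) (j : ℤ) :
    Δ_[1] (w + σ) j = (1 + θ (j + 1) - η j) * Δ_[1] w j := by
  simp only [fwdDiff, Pi.add_apply, hθ (j + 1), hη j, add_sub_cancel_right]
  ring

lemma fwdDiff_sub_eq_mul {w σ θ η : ℤ → ℝ} (hθ : ∀ j, σ j = θ j * (w j - w (j - 1)))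
    (hη : ∀ j, σ j = η j * (w (j + 1) - w j)) (j : ℤ) :
    Δ_[1] (w - σ) j = (1 + η j - θ (j + 1)) * Δ_[1] w j := by
  simp only [fwdDiff, Pi.sub_apply, hθ (j + 1), hη j, add_sub_cancel_right]
  ring

theorem exists_redistribute_incremental_form {lam dx dt : ℝ} (hν₀ : 0 ≤ lam * dt / dx)
    (hν : lam * dt / dx ≤ 1 / 2) {u wp wm σp σm F unew : ℤ → ℝ}
    (hu : ∀ j, lam * u j = wp j - wm j)
    (hF : ∀ j, F (j + 1) = (wp j + σp j) + (wm (j + 1) - σm (j + 1)))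
    (hnew : ∀ j, unew j = u j - dt / dx * (F (j + 1) - F j))
    (hσp : ∀ j, ∃ θ η : ℝ, θ ∈ Icc (0 : ℝ) 1 ∧ η ∈ Icc (0 : ℝ) 1 ∧
      σp j = θ * (wp j - wp (j - 1)) ∧ σp j = η * (wp (j + 1) - wp j))
    (hσm : ∀ j, ∃ θ η : ℝ, θ ∈ Icc (0 : ℝ) 1 ∧ η ∈ Icc (0 : ℝ) 1 ∧
      σm j = θ * (wm j - wm (j - 1)) ∧ σm j = η * (wm (j + 1) - wm j)) :
    ∃ C D : ℤ → ℝ, (∀ j, C j ∈ Icc (0 : ℝ) 1) ∧ (∀ j, D j ∈ Icc (0 : ℝ) 1) ∧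
      ∀ j, lam * Δ_[1] unew j =
        redistribute C (Δ_[1] wp) (-1) j - redistribute D (Δ_[1] wm) 1 j := by
  choose θp ηp hθp hηp hσθp hσηp using hσp
  choose θm ηm hθm hηm hσθm hσηm using hσm
  refine ⟨fun i ↦ lam * dt / dx * (1 + θp (i + 1) - ηp i),
    fun i ↦ lam * dt / dx * (1 + ηm i - θm (i + 1)),
    fun i ↦ mul_one_add_sub_mem_Icc hν₀ hν (hθp _) (hηp _),
    fun i ↦ mul_one_add_sub_mem_Icc hν₀ hν (hηm _) (hθm _), fun j ↦ ?_⟩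
  have hflux : ∀ i, F (i + 1) - F i = Δ_[1] (wp + σp) (i - 1) + Δ_[1] (wm - σm) i := by
    intro i
    have hF_pred := hF (i - 1)
    rw [sub_add_cancel] at hF_pred
    rw [hF i, hF_pred]
    simp only [fwdDiff, Pi.add_apply, Pi.sub_apply, sub_add_cancel]
    ring
  have hflux_succ := hflux (j + 1)
  rw [add_sub_cancel_right] at hflux_succ
  have hP := fwdDiff_add_eq_mul hσθp hσηp
  have hM := fwdDiff_sub_eq_mul hσθm hσηm
  rw [fwdDiff, hnew (j + 1), hnew j, hflux_succ, hflux j, hP j, hP (j - 1), hM j, hM (j + 1)]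
  simp only [redistribute, fwdDiff, sub_add_cancel, ← sub_eq_add_neg]
  linear_combination hu (j + 1) - hu j

lemma abs_add_add_abs_sub_of_abs_le {a b : ℝ} (h : |a| ≤ |b|) : |a + b| + |a - b| = 2 * |b| := by
  rcases abs_le.1 h with ⟨h₁, h₂⟩
  rcases le_total 0 b with hb | hb
  · rw [abs_of_nonneg hb] at h₁ h₂ ⊢
    rw [abs_of_nonneg (by linarith), abs_of_nonpos (by linarith)]
    ring
  · rw [abs_of_nonpos hb] at h₁ h₂ ⊢
    rw [abs_of_nonpos (by linarith), abs_of_nonneg (by linarith)]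
    ring

lemma abs_sub_le_of_abs_deriv_le {f : ℝ → ℝ} (hf : Differentiable ℝ f) {L : ℝ}
    (hL : ∀ s, |deriv f s| ≤ L) (x y : ℝ) : |f x - f y| ≤ L * |x - y| := by
  simpa only [Real.norm_eq_abs] using convex_univ.norm_image_sub_le_of_norm_deriv_le
    (fun z _ ↦ hf z) (fun z _ ↦ hL z) (mem_univ y) (mem_univ x)

lemma hasFiniteSupport_fwdDiff_comp {u : ℤ → ℝ} {c : ℝ} (hc : {j | u j ≠ c}.Finite)
    (g : ℝ → ℝ) : HasFiniteSupport (Δ_[1] fun j ↦ g (u j)) := by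
  have hv : HasFiniteSupport fun j ↦ g (u j) - g c :=
    hc.subset fun j hj hjc ↦ hj (by simp only [hjc, sub_self])
  have hΔ : (Δ_[1] fun j ↦ g (u j)) = fun j ↦ (g (u (j + 1)) - g c) - (g (u j) - g c) := by
    ext j; simp [fwdDiff]
  rw [hΔ]
  exact (hv.fun_comp_of_injective (add_left_injective 1)).fun_sub hv

lemma abs_fwdDiff_add_abs_fwdDiff_eq {f : ℝ → ℝ} {lam : ℝ} (hlam : 0 ≤ lam)
    (hlip : ∀ x y, |f x - f y| ≤ lam * |x - y|) (u : ℤ → ℝ) (j : ℤ) :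
    |Δ_[1] (fun i ↦ f (u i) / 2 + lam / 2 * u i) j|
      + |Δ_[1] (fun i ↦ f (u i) / 2 - lam / 2 * u i) j| = lam * |Δ_[1] u j| := by
  set d := f (u (j + 1)) - f (u j)
  set e := Δ_[1] u j
  have hlam₂ : |lam / 2| = lam / 2 := abs_of_nonneg (by linarith)
  have hle : |d / 2| ≤ |lam / 2 * e| := by
    have hde : |d| ≤ lam * |e| := hlip (u (j + 1)) (u j)
    rw [abs_div, abs_two, abs_mul, hlam₂]
    linarith
  calc |Δ_[1] (fun i ↦ f (u i) / 2 + lam / 2 * u i) j|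
        + |Δ_[1] (fun i ↦ f (u i) / 2 - lam / 2 * u i) j|
      = |d / 2 + lam / 2 * e| + |d / 2 - lam / 2 * e| := by
        simp only [d, e, fwdDiff]; ring_nf
    _ = lam * |e| := by rw [abs_add_add_abs_sub_of_abs_le hle, abs_mul, hlam₂]; ring

/-- under the subcharacteristic condition and λΔt ≤ Δx/2 the second-order
central MUSCL scheme with the node-adjacent slopes s_{−1}⁻ and s_0⁺ set to zero is
total variation diminishing. -/
theorem central_muscl_tvd
    (f : ℝ → ℝ) (hf : Differentiable ℝ f)
    (lam dx dt : ℝ) (hlam : 0 < lam) (hdx : 0 < dx) (hdt : 0 < dt)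
    (hsub : ∀ s : ℝ, -lam ≤ deriv f s ∧ deriv f s ≤ lam)
    (hcfl : lam * dt ≤ dx / 2)
    (u : ℤ → ℝ)
    (hconst : ∃ c : ℝ, {j : ℤ | u j ≠ c}.Finite)
    (wm wp : ℤ → ℝ)
    (hwm : ∀ j : ℤ, wm j = f (u j) / 2 - (lam / 2) * u j)
    (hwp : ∀ j : ℤ, wp j = f (u j) / 2 + (lam / 2) * u j)
    (sm sp : ℤ → ℝ)
    (hsm : ∀ j : ℤ, sm j = if j = -1 then 0 else
      minmod (2 * (wm j - wm (j - 1)) / dx) ((wm (j + 1) - wm (j - 1)) / (2 * dx))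
        (2 * (wm (j + 1) - wm j) / dx))
    (hsp : ∀ j : ℤ, sp j = if j = 0 then 0 else
      minmod (2 * (wp j - wp (j - 1)) / dx) ((wp (j + 1) - wp (j - 1)) / (2 * dx))
        (2 * (wp (j + 1) - wp j) / dx))
    (F : ℤ → ℝ)
    (hF : ∀ j : ℤ, F j =
      (f (u (j - 1)) + f (u j)) / 2 - (lam / 2) * (u j - u (j - 1))
        - (dx / 2) * (sm j - sp (j - 1)))
    (unew : ℤ → ℝ)
    (hnew : ∀ j : ℤ, unew j = u j - (dt / dx) * (F (j + 1) - F j)) :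
    ∑ᶠ j : ℤ, |unew (j + 1) - unew j| ≤ ∑ᶠ j : ℤ, |u (j + 1) - u j| := by
  obtain ⟨c, hc⟩ := hconst
  have hwp' : wp = fun j ↦ f (u j) / 2 + lam / 2 * u j := funext hwp
  have hwm' : wm = fun j ↦ f (u j) / 2 - lam / 2 * u j := funext hwm
  obtain ⟨C, D, hC, hD, hincr⟩ := exists_redistribute_incremental_form (by positivity)
    (by rw [div_le_iff₀ hdx]; linarith) (σp := fun j ↦ dx / 2 * sp j) (σm := fun j ↦ dx / 2 * sm j)
    (fun j ↦ by rw [hwp, hwm]; ring) (fun j ↦ by rw [hF, hwp, hwm, add_sub_cancel_right]; ring)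
    hnew
    (fun j ↦ exists_half_mul_mc_slope_eq hdx wp j (by rw [hsp j]; exact ite_eq_or_eq _ _ _))
    (fun j ↦ exists_half_mul_mc_slope_eq hdx wm j (by rw [hsm j]; exact ite_eq_or_eq _ _ _))
  have hlip := abs_sub_le_of_abs_deriv_le hf fun s ↦ abs_le.2 (hsub s)
  have hΔwp : HasFiniteSupport (Δ_[1] wp) :=
    hwp' ▸ hasFiniteSupport_fwdDiff_comp hc fun x ↦ f x / 2 + lam / 2 * x
  have hΔwm : HasFiniteSupport (Δ_[1] wm) :=
    hwm' ▸ hasFiniteSupport_fwdDiff_comp hc fun x ↦ f x / 2 - lam / 2 * x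
  refine le_of_mul_le_mul_left ?_ hlam
  calc lam * ∑ᶠ j, |unew (j + 1) - unew j|
      = ∑ᶠ j, |redistribute C (Δ_[1] wp) (-1) j - redistribute D (Δ_[1] wm) 1 j| := by
        rw [mul_finsum]
        exact finsum_congr fun j ↦ by rw [← hincr j, abs_mul, abs_of_pos hlam]; rfl
    _ ≤ ∑ᶠ j, |Δ_[1] wp j| + ∑ᶠ j, |Δ_[1] wm j| :=
        finsum_abs_redistribute_sub_le hC hD hΔwp hΔwm (-1) 1
    _ = lam * ∑ᶠ j, |u (j + 1) - u j| := by
        rw [← finsum_add_distrib (by fun_prop (disch := simp)) (by fun_prop (disch := simp)),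
          mul_finsum, hwp', hwm']
        exact finsum_congr (abs_fwdDiff_add_abs_fwdDiff_eq hlam.le hlip u)
end

section
/- Consider a node with incoming edges k ∈ δ⁻ and outgoing edges k ∈ δ⁺ (both finite, nonempty), flux functions f_k : ℝ → ℝ and speeds λ_k > 0. Let u_k ∈ ℝ be the node-adjacent cell average on edge k, and let the coupling data satisfy, for each incoming edge k ∈ δ⁻, the backward Lax-curve relation v_R^k − f_k(u_k) = −λ_k·(u_R^k − u_k), for each outgoing edge k ∈ δ⁺ the forward Lax-curve relation v_L^k − f_k(u_k) = λ_k·(u_L^k − u_k), and the Kirchhoff condition Σ_{k∈δ⁻} v_R^k = Σ_{k∈δ⁺} v_L^k. Define the node numerical fluxes F^k = ½(v_R^k + f_k(u_k)) − (λ_k/2)(u_R^k − u_k) for k ∈ δ⁻ and F^k = ½(f_k(u_k) + v_L^k) − (λ_k/2)(u_k − u_L^k) for k ∈ δ⁺. Then the scheme is conservative at the node: Σ_{k∈δ⁻} F^k = Σ_{k∈δ⁺} F^k. -/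
/-- at a node with finitely many incoming and outgoing edges, if the
coupling data lies on the Lax curves through the traces and satisfies the Kirchhoff
condition, then the node numerical fluxes of the central scheme are conservative. -/
theorem central_scheme_node_conservation
    {ι : Type*} [DecidableEq ι] (δm δp : Finset ι) (hδm : δm.Nonempty) (hδp : δp.Nonempty)
    (f : ι → ℝ → ℝ) (lam : ι → ℝ)
    (hlam : ∀ k ∈ δm ∪ δp, 0 < lam k)
    (u uR vR uL vL Fm Fp : ι → ℝ)
    (hback : ∀ k ∈ δm, vR k - f k (u k) = -(lam k) * (uR k - u k))
    (hforw : ∀ k ∈ δp, vL k - f k (u k) = lam k * (uL k - u k))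
    (hkirchhoff : ∑ k ∈ δm, vR k = ∑ k ∈ δp, vL k)
    (hFm : ∀ k ∈ δm, Fm k = (vR k + f k (u k)) / 2 - (lam k / 2) * (uR k - u k))
    (hFp : ∀ k ∈ δp, Fp k = (f k (u k) + vL k) / 2 - (lam k / 2) * (u k - uL k)) :
    ∑ k ∈ δm, Fm k = ∑ k ∈ δp, Fp k := by
  have h1 : ∀ k ∈ δm, Fm k = vR k := by
    intro k hk
    have := hback k hk
    rw [hFm k hk]; nlinarith [this]
  have h2 : ∀ k ∈ δp, Fp k = vL k := by
    intro k hk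
    have := hforw k hk
    rw [hFp k hk]; nlinarith [this]
  rw [Finset.sum_congr rfl h1, Finset.sum_congr rfl h2, hkirchhoff]
end
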